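/- Let 0 < b < 1. For τ ∈ (−b, b), the function τ ↦ (1/√(1 − b²)) · arctan( τ·√((1 − b²)/(b² − τ²)) ) is an antiderivative of τ ↦ 1/((1 − τ²)·√(b² − τ²)). -/

import Mathlib

/-!
Write the argument of arctan as `√k · τ / √(a - τ²)` with `a = b²`, `k = 1 - b²`. The chain rule
gives the derivative `√k · a / ((a - τ² + k τ²) √(a - τ²))`, and for this particular `k` the factor
`a - τ² + k τ²` collapses to `b² (1 - τ²)`, which cancels the `b²` in the numerator.
-/

open Real

lemma hasDerivAt_div_sqrt_sub_sq {a t : ℝ} (ht : t ^ 2 < a) :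
    HasDerivAt (fun x => x / √(a - x ^ 2)) (a / ((a - t ^ 2) * √(a - t ^ 2))) t := by
  have hpos : 0 < a - t ^ 2 := sub_pos.2 ht
  have hsqrt : 0 < √(a - t ^ 2) := sqrt_pos.2 hpos
  have hden : HasDerivAt (fun x => √(a - x ^ 2)) (-(2 * t) / (2 * √(a - t ^ 2))) t := by
    simpa using ((hasDerivAt_pow 2 t).const_sub a).sqrt hpos.ne'
  refine ((hasDerivAt_id' t).div hden hsqrt.ne').congr_deriv ?_
  field_simp
  rw [sq_sqrt hpos.le]
  ring

lemma hasDerivAt_arctan_mul_sqrt_div {a k t : ℝ} (hk : 0 ≤ k) (ht : t ^ 2 < a) :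
    HasDerivAt (fun x => arctan (x * √(k / (a - x ^ 2))))
      (√k * a / ((a - t ^ 2 + k * t ^ 2) * √(a - t ^ 2))) t := by
  have hpos : 0 < a - t ^ 2 := sub_pos.2 ht
  have hfun (x : ℝ) : x * √(k / (a - x ^ 2)) = √k * (x / √(a - x ^ 2)) := by
    rw [sqrt_div hk]
    ring
  simp_rw [hfun]
  refine ((hasDerivAt_div_sqrt_sub_sq ht).const_mul √k).arctan.congr_deriv ?_
  field_simp
  rw [sq_sqrt hk, sq_sqrt hpos.le]
  ring

theorem stmt_8_general (b : ℝ) (hb1 : b < 1) :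
    ∀ τ ∈ Set.Ioo (-b) b,
      HasDerivAt
        (fun t : ℝ =>
          1 / Real.sqrt (1 - b ^ 2) *
            Real.arctan (t * Real.sqrt ((1 - b ^ 2) / (b ^ 2 - t ^ 2))))
        (1 / ((1 - τ ^ 2) * Real.sqrt (b ^ 2 - τ ^ 2))) τ := by
  rintro τ ⟨hlo, hhi⟩
  have hτ : τ ^ 2 < b ^ 2 := sq_lt_sq' hlo hhi
  have hk : 0 < 1 - b ^ 2 := by nlinarith
  have hb : 0 < b := by linarith
  refine ((hasDerivAt_arctan_mul_sqrt_div hk.le hτ).const_mul (1 / √(1 - b ^ 2))).congr_deriv ?_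
  rw [show b ^ 2 - τ ^ 2 + (1 - b ^ 2) * τ ^ 2 = b ^ 2 * (1 - τ ^ 2) by ring]
  field_simp

theorem stmt_8 (b : ℝ) (hb0 : 0 < b) (hb1 : b < 1) :
    ∀ τ ∈ Set.Ioo (-b) b,
      HasDerivAt
        (fun t : ℝ =>
          1 / Real.sqrt (1 - b ^ 2) *
            Real.arctan (t * Real.sqrt ((1 - b ^ 2) / (b ^ 2 - t ^ 2))))
        (1 / ((1 - τ ^ 2) * Real.sqrt (b ^ 2 - τ ^ 2))) τ :=
  stmt_8_general b hb1
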